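/- Let C ⊂ ℝ³ be a C² injective compact curve and η_n the cutoff functions built from a smooth profile χ. Then there exist n₀ ∈ ℕ and a constant C₀ > 0 such that for every natural number n > n₀, the function η_n is continuously differentiable on ℝ³ (ContDiff ℝ 1 η_n) and ‖fderiv ℝ η_n x‖ ≤ C₀ · n for every x ∈ ℝ³. -/

import Mathlib

open MeasureTheory Metric Set Filter
open scoped RealInnerProductSpace ContDiff SchwartzMap

noncomputable section

abbrev E3 := EuclideanSpace ℝ (Fin 3)

/-!
Near a C² injective arclength-parametrized compact curve every point has a unique nearest point
on the curve: two nearest parameters `s, t` must be close, by injectivity and compactness, and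
between them `u ↦ ‖x - γ u‖²` is strictly convex, its second derivative being
`2 - 2⟪x - γ u, γ'' u⟫ > 0`. Where the nearest point `p x` is unique it depends continuously on
`x`, and comparing `x` and `x + h` with both nearest points shows that `infDist ^ 2` has derivative
`2⟪x - p x, ·⟫`; hence `infDist` is C¹ off the curve inside the tube. For large `n`, `η n` is
locally constant outside the shell `1 ≤ n · infDist ≤ 2`, which lies in the tube, and the
gradient bound is the Lipschitz constant `n · sup |χ'|` of `η n`.
-/

open scoped Topology
open Asymptotics

namespace Metric

variable {X : Type*} [MetricSpace X]

def nearestPoints (K : Set X) (x : X) : Set X := {p ∈ K | infDist x K = dist x p}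

theorem _root_.IsCompact.nearestPoints_nonempty {K : Set X} (hK : IsCompact K) (hne : K.Nonempty)
    (x : X) : (nearestPoints K x).Nonempty :=
  hK.exists_infDist_eq_dist hne x

theorem continuousAt_of_mem_nearestPoints {K : Set X} (hK : IsCompact K) {P : X → X}
    (hP : ∀ y, P y ∈ nearestPoints K y) {x : X} (hx : (nearestPoints K x).Subsingleton) :
    ContinuousAt P x := by
  refine hK.tendsto_nhds_of_unique_mapClusterPt (.of_forall fun y => (hP y).1) ?_
  intro q hqK hq
  have hgraph : MapClusterPt (x, q) (𝓝 x) fun y => (y, P y) := by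
    rw [((𝓝 x).basis_sets.prod_nhds (𝓝 q).basis_sets).mapClusterPt_iff_frequently]
    rintro ⟨U, V⟩ ⟨hU, hV⟩
    exact ((mapClusterPt_iff_frequently.1 hq V hV).and_eventually hU).mono
      fun y hy => ⟨hy.2, hy.1⟩
  have hclosed : IsClosed {z : X × X | infDist z.1 K = dist z.1 z.2} :=
    isClosed_eq ((continuous_infDist_pt K).comp continuous_fst) continuous_dist
  have hnearest : infDist x K = dist x q :=
    hclosed.mem_of_mapClusterPt hgraph (.of_forall fun y => (hP y).2)
  exact hx ⟨hqK, hnearest⟩ (hP x)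

end Metric

theorem sq_infDist_le_norm_sub_sq {F : Type*} [SeminormedAddCommGroup F] {K : Set F} {p : F}
    (hp : p ∈ K) (x : F) : infDist x K ^ 2 ≤ ‖x - p‖ ^ 2 := by
  rw [← dist_eq_norm]
  exact pow_le_pow_left₀ infDist_nonneg (infDist_le_dist_of_mem hp) 2

theorem exists_pos_le_dist_of_injOn {X : Type*} [MetricSpace X] {γ : ℝ → X}
    (hγ : Continuous γ) {a b : ℝ} (hinj : InjOn γ (Icc a b)) {δ : ℝ} (hδ : 0 < δ) :
    ∃ c > 0, ∀ s ∈ Icc a b, ∀ t ∈ Icc a b, δ ≤ |s - t| → c ≤ dist (γ s) (γ t) := by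
  have hT : IsCompact ((Icc a b ×ˢ Icc a b) ∩ {st : ℝ × ℝ | δ ≤ |st.1 - st.2|}) :=
    (isCompact_Icc.prod isCompact_Icc).inter_right
      (isClosed_le continuous_const (continuous_fst.sub continuous_snd).abs)
  obtain ⟨c, hc, hle⟩ := hT.exists_forall_le'
    (hγ.comp continuous_fst |>.dist (hγ.comp continuous_snd)).continuousOn
    (a := 0) fun st ⟨⟨hs, ht⟩, (hst : δ ≤ |st.1 - st.2|)⟩ => dist_pos.2 fun heq => by
      rw [hinj hs ht heq, sub_self, abs_zero] at hst
      linarith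
  exact ⟨c, hc, fun s hs t ht hst => hle (s, t) ⟨⟨hs, ht⟩, hst⟩⟩

section InnerProductSpace

variable {E : Type*} [NormedAddCommGroup E] [InnerProductSpace ℝ E]

theorem hasFDerivAt_infDist_sq {K : Set E} {P : E → E} (hP : ∀ y, P y ∈ nearestPoints K y)
    {x : E} (hPx : ContinuousAt P x) :
    HasFDerivAt (fun y => infDist y K ^ 2) ((2 : ℝ) • innerSL ℝ (x - P x)) x := by
  have hsq : ∀ y, infDist y K ^ 2 = ‖y - P y‖ ^ 2 := fun y => by rw [(hP y).2, dist_eq_norm]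
  have hremainder : ∀ h : E, |infDist (x + h) K ^ 2 - infDist x K ^ 2 - 2 * ⟪x - P x, h⟫|
      ≤ (2 * ‖P x - P (x + h)‖ + ‖h‖) * ‖h‖ := by
    intro h
    have hup := sq_infDist_le_norm_sub_sq (hP x).1 (x + h)
    have hlow := sq_infDist_le_norm_sub_sq (hP (x + h)).1 x
    rw [hsq (x + h)] at hup ⊢
    rw [hsq x] at hlow ⊢
    set a := x - P x
    set b := P x - P (x + h)
    have hsplit : x + h - P (x + h) = (a + b) + h := by simp only [a, b]; abel
    rw [show x + h - P x = a + h by simp only [a]; abel, norm_add_sq_real] at hup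
    rw [show x - P (x + h) = a + b by simp only [a, b]; abel] at hlow
    rw [hsplit, norm_add_sq_real, inner_add_left] at hup ⊢
    have hcs := abs_real_inner_le_norm b h
    rw [abs_le] at hcs ⊢
    constructor <;> nlinarith [norm_nonneg h, norm_nonneg b]
  have hsmall : Tendsto (fun h : E => 2 * ‖P x - P (x + h)‖ + ‖h‖) (𝓝 0) (𝓝 0) := by
    have hPh : Tendsto (fun h : E => P (x + h)) (𝓝 0) (𝓝 (P x)) :=
      hPx.tendsto.comp (by simpa using (continuous_const_add x).tendsto (0 : E))
    simpa using (((tendsto_const_nhds (x := P x)).sub hPh).norm.const_mul 2).add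
      (tendsto_norm_zero (E := E))
  rw [hasFDerivAt_iff_isLittleO_nhds_zero]
  refine (IsBigO.of_bound' (.of_forall fun h => ?_)).trans_isLittleO
    (((isLittleO_one_iff ℝ).2 hsmall).mul_isBigO (isBigO_refl (fun h : E => ‖h‖) _)
      |>.trans_isBigO (by simpa using isBigO_refl (fun h : E => ‖h‖) _)
      |> isLittleO_norm_right.1)
  rw [smul_apply, innerSL_apply_apply, smul_eq_mul, Real.norm_eq_abs,
    Real.norm_eq_abs, abs_mul, abs_norm,
    abs_of_nonneg (show (0 : ℝ) ≤ 2 * ‖P x - P (x + h)‖ + ‖h‖ by positivity)]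
  exact hremainder h

theorem contDiffAt_infDist {K U : Set E} (hK : IsCompact K) (hU : IsOpen U)
    (huniq : ∀ y ∈ U, (nearestPoints K y).Subsingleton) {x : E} (hx : x ∈ U)
    (hpos : 0 < infDist x K) : ContDiffAt ℝ 1 (infDist · K) x := by
  have hne : K.Nonempty := nonempty_iff_ne_empty.2 fun h => by simp [h] at hpos
  choose P hP using hK.nearestPoints_nonempty hne
  have hPU : ContinuousOn P U := fun y hy =>
    (continuousAt_of_mem_nearestPoints hK hP (huniq y hy)).continuousWithinAt
  have hsq : ContDiffAt ℝ 1 (fun y => infDist y K ^ 2) x :=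
    contDiffAt_one_iff.2 ⟨fun y => (2 : ℝ) • innerSL ℝ (y - P y), U, hU.mem_nhds hx,
      ((innerSL ℝ).continuous.comp_continuousOn (continuousOn_id.sub hPU)).const_smul (2 : ℝ),
      fun y hy => hasFDerivAt_infDist_sq hP
        (continuousAt_of_mem_nearestPoints hK hP (huniq y hy))⟩
  have hsqrt : (infDist · K) = Real.sqrt ∘ fun y => infDist y K ^ 2 :=
    funext fun y => (Real.sqrt_sq infDist_nonneg).symm
  rw [hsqrt]
  exact (Real.contDiffAt_sqrt (by positivity)).comp x hsq

theorem strictConvexOn_norm_sub_sq {γ : ℝ → E} (hγ : ContDiff ℝ 2 γ) {D : Set ℝ}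
    (hD : Convex ℝ D) (x : E)
    (hcurv : ∀ u ∈ interior D, ⟪x - γ u, deriv (deriv γ) u⟫ < ‖deriv γ u‖ ^ 2) :
    StrictConvexOn ℝ D fun u => ‖x - γ u‖ ^ 2 := by
  have hγ1 : ContDiff ℝ 1 (deriv γ) := hγ.iterate_deriv' 1 1
  have hderiv : deriv (fun u => ‖x - γ u‖ ^ 2) = fun u => -2 * ⟪x - γ u, deriv γ u⟫ := by
    funext u
    simpa using ((hγ.differentiable (by simp) u).hasDerivAt.const_sub x).norm_sq.deriv
  refine strictConvexOn_of_deriv2_pos hD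
    ((continuous_const.sub hγ.continuous).norm.pow 2).continuousOn fun u hu => ?_
  have hderiv2 := (((hγ.differentiable (by simp) u).hasDerivAt.const_sub x).inner ℝ
    (hγ1.differentiable (by simp) u).hasDerivAt).const_mul (-2)
  rw [Function.iterate_succ_apply, Function.iterate_one, hderiv, hderiv2.deriv, inner_neg_left,
    real_inner_self_eq_norm_sq]
  linarith [hcurv u hu]

theorem eq_of_infDist_image_eq_dist {γ : ℝ → E} (hγ : ContDiff ℝ 2 γ) {S : Set ℝ} {x : E}
    {s t : ℝ} (hsub : uIcc s t ⊆ S)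
    (hcurv : ∀ u ∈ uIcc s t, ⟪x - γ u, deriv (deriv γ) u⟫ < ‖deriv γ u‖ ^ 2)
    (hs : infDist x (γ '' S) = dist x (γ s)) (ht : infDist x (γ '' S) = dist x (γ t)) :
    s = t := by
  have hmin : ∀ v, infDist x (γ '' S) = dist x (γ v) →
      IsMinOn (fun u => ‖x - γ u‖ ^ 2) (uIcc s t) v := fun v hv u hu => by
    show ‖x - γ v‖ ^ 2 ≤ ‖x - γ u‖ ^ 2
    rw [← dist_eq_norm, ← hv]
    exact sq_infDist_le_norm_sub_sq (mem_image_of_mem γ (hsub hu)) x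
  exact (strictConvexOn_norm_sub_sq hγ (convex_uIcc s t) x fun u hu =>
    hcurv u (interior_subset hu)).eq_of_isMinOn (hmin s hs) (hmin t ht) left_mem_uIcc right_mem_uIcc

theorem exists_subsingleton_nearestPoints_of_arclength {γ : ℝ → E} (hγ : ContDiff ℝ 2 γ)
    {a b : ℝ} (hinj : InjOn γ (Icc a b)) (harc : ∀ s ∈ Icc a b, ‖deriv γ s‖ = 1) :
    ∃ ε > 0, ∀ x, infDist x (γ '' Icc a b) < ε → (nearestPoints (γ '' Icc a b) x).Subsingleton := by
  have hγd : Differentiable ℝ γ := hγ.differentiable (by simp)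
  obtain ⟨B, hB⟩ : ∃ B, ∀ u ∈ Icc a b, ‖deriv (deriv γ) u‖ ≤ B :=
    isCompact_Icc.exists_bound_of_continuousOn (hγ.iterate_deriv' 0 2).continuous.continuousOn
  obtain ⟨ρ, hρ, hρB⟩ : ∃ ρ > 0, ∀ u ∈ Icc a b, ρ * ‖deriv (deriv γ) u‖ < 1 :=
    ⟨(|B| + 1)⁻¹, by positivity, fun u hu => by
      rw [inv_mul_lt_iff₀ (by positivity)]
      linarith [hB u hu, le_abs_self B]⟩
  obtain ⟨c, hc, hsep⟩ := exists_pos_le_dist_of_injOn hγ.continuous hinj (half_pos hρ)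
  refine ⟨min (c / 2) (ρ / 2), by positivity, fun x hx p hp q hq => ?_⟩
  obtain ⟨⟨s, hs, rfl⟩, hps⟩ := hp
  obtain ⟨⟨t, ht, rfl⟩, hqt⟩ := hq
  set d := infDist x (γ '' Icc a b)
  have hst : |t - s| < ρ / 2 := by
    by_contra! h
    have hfar := hsep s hs t ht (by rwa [abs_sub_comm])
    have hnear := dist_triangle_left (γ s) (γ t) x
    linarith [min_le_left (c / 2) (ρ / 2)]
  have hsub : uIcc s t ⊆ Icc a b := uIcc_subset_Icc hs ht
  have hx_near : ∀ u ∈ uIcc s t, ‖x - γ u‖ < ρ := fun u hu => calc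
    ‖x - γ u‖ ≤ ‖x - γ s‖ + ‖γ s - γ u‖ := norm_sub_le_norm_sub_add_norm_sub ..
    _ ≤ d + |s - u| := by
        rw [← dist_eq_norm, ← hps]
        gcongr
        simpa using (convex_Icc a b).norm_image_sub_le_of_norm_hasDerivWithin_le
          (fun v _ => (hγd v).hasDerivAt.hasDerivWithinAt) (fun v hv => (harc v hv).le) (hsub hu)
          hs
    _ < ρ / 2 + ρ / 2 := add_lt_add_of_lt_of_le (hx.trans_le (min_le_right _ _))
        ((abs_sub_comm s u).trans_le ((abs_sub_left_of_mem_uIcc hu).trans hst.le))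
    _ = ρ := add_halves ρ
  rw [eq_of_infDist_image_eq_dist hγ hsub (fun u hu => ?_) hps hqt]
  calc ⟪x - γ u, deriv (deriv γ) u⟫ ≤ ‖x - γ u‖ * ‖deriv (deriv γ) u‖ := real_inner_le_norm _ _
    _ ≤ ρ * ‖deriv (deriv γ) u‖ := by gcongr; exact (hx_near u hu).le
    _ < ‖deriv γ u‖ ^ 2 := by rw [harc u (hsub hu), one_pow]; exact hρB u (hsub hu)

end InnerProductSpace

section Cutoff

theorem ContDiff.comp_of_const_off_Icc {F : Type*} [NormedAddCommGroup F] [NormedSpace ℝ F]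
    {g : ℝ → ℝ} {n : WithTop ℕ∞} (hg : ContDiff ℝ n g) {a b c₀ c₁ : ℝ}
    (hga : ∀ s, s < a → g s = c₀) (hgb : ∀ s, b < s → g s = c₁) {f : F → ℝ}
    (hf : Continuous f) (hfn : ∀ x, f x ∈ Icc a b → ContDiffAt ℝ n f x) :
    ContDiff ℝ n (g ∘ f) := by
  refine contDiff_iff_contDiffAt.2 fun x => ?_
  rcases lt_or_ge (f x) a with hxa | hax
  · exact contDiffAt_const.congr_of_eventuallyEq
      ((hf.continuousAt.eventually (Iio_mem_nhds hxa)).mono fun y hy => hga _ hy)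
  rcases le_or_gt (f x) b with hxb | hbx
  · exact hg.contDiffAt.comp x (hfn x ⟨hax, hxb⟩)
  · exact contDiffAt_const.congr_of_eventuallyEq
      ((hf.continuousAt.eventually (Ioi_mem_nhds hbx)).mono fun y hy => hgb _ hy)

theorem ContDiff.exists_lipschitzWith_of_const_off_Icc {g : ℝ → ℝ} (hg : ContDiff ℝ 1 g)
    {a b c₀ c₁ : ℝ} (hga : ∀ s, s < a → g s = c₀) (hgb : ∀ s, b < s → g s = c₁) :
    ∃ K, LipschitzWith K g := by
  have hsupp : HasCompactSupport (deriv g) := by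
    refine HasCompactSupport.intro (isCompact_Icc (a := a) (b := b)) fun s hs => ?_
    rcases lt_or_ge s a with hsa | has
    · exact (eventuallyEq_of_mem (Iio_mem_nhds hsa) hga).deriv_eq.trans (deriv_const s c₀)
    · have hbs : b < s := lt_of_not_ge fun hsb => hs ⟨has, hsb⟩
      exact (eventuallyEq_of_mem (Ioi_mem_nhds hbs) hgb).deriv_eq.trans (deriv_const s c₁)
  obtain ⟨K, hK⟩ := (hg.continuous_deriv le_rfl).bounded_above_of_compact_support hsupp
  exact ⟨K.toNNReal, lipschitzWith_of_nnnorm_deriv_le (hg.differentiable one_ne_zero) fun s => by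
    rw [← NNReal.coe_le_coe, coe_nnnorm, Real.coe_toNNReal']
    exact (hK s).trans (le_max_left _ _)⟩

end Cutoff

theorem cutoff_C1_and_fderiv_bound_of_C2_curve_general
    (γ : ℝ → E3) (L : ℝ)
    (hγ : ContDiff ℝ 2 γ) (hγinj : Set.InjOn γ (Set.Icc 0 L))
    (harc : ∀ s ∈ Set.Icc (0:ℝ) L, ‖deriv γ s‖ = 1)
    (C : Set E3) (hC : C = γ '' Set.Icc 0 L)
    (χ : ℝ → ℝ) (hχ : ContDiff ℝ ∞ χ)
    (hχ0 : ∀ s : ℝ, s < 1 → χ s = 0) (hχ1 : ∀ s : ℝ, 2 < s → χ s = 1)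
    (η : ℕ → E3 → ℝ) (hη : ∀ n x, η n x = χ (n * Metric.infDist x C)) :
    ∃ n₀ : ℕ, ∃ C₀ > 0, ∀ n : ℕ, n > n₀ →
      ContDiff ℝ 1 (η n) ∧ ∀ x : E3, ‖fderiv ℝ (η n) x‖ ≤ C₀ * n := by
  obtain ⟨ε, hε, huniq⟩ := exists_subsingleton_nearestPoints_of_arclength hγ hγinj harc
  rw [← hC] at huniq
  have hχ1' : ContDiff ℝ 1 χ := hχ.of_le (by simp)
  obtain ⟨K, hK⟩ := hχ1'.exists_lipschitzWith_of_const_off_Icc hχ0 hχ1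
  refine ⟨⌈2 / ε⌉₊, K + 1, by positivity, fun n hn => ?_⟩
  have hn : 2 / ε < n := (Nat.le_ceil _).trans_lt (by exact_mod_cast hn)
  have hn0 : (0 : ℝ) < n := (by positivity : (0 : ℝ) < 2 / ε).trans hn
  rw [show η n = χ ∘ fun x => (n : ℝ) * infDist x C from funext (hη n)]
  refine ⟨hχ1'.comp_of_const_off_Icc hχ0 hχ1 (by fun_prop) fun x hx => ?_, fun x => ?_⟩
  · have hpos : 0 < infDist x C := pos_of_mul_pos_right (one_pos.trans_le hx.1) hn0.le
    have hlt : infDist x C < ε := by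
      rw [div_lt_iff₀ hε] at hn
      nlinarith [hx.2]
    exact contDiffAt_const.mul (contDiffAt_infDist (hC ▸ isCompact_Icc.image hγ.continuous)
      (isOpen_lt (continuous_infDist_pt C) continuous_const) huniq hlt hpos)
  · have hlip : LipschitzWith (K * (‖(n : ℝ)‖₊ * 1)) (χ ∘ fun x => (n : ℝ) * infDist x C) :=
      hK.comp ((lipschitzWith_smul (n : ℝ)).comp (lipschitz_infDist_pt C))
    calc ‖fderiv ℝ (χ ∘ fun x => (n : ℝ) * infDist x C) x‖ ≤ K * n := by
          simpa using norm_fderiv_le_of_lipschitz ℝ hlip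
      _ ≤ (K + 1) * n := by gcongr; linarith

/-- The cutoff functions `η_n(x) = χ(n · d(x, C))` around a C² injective compact curve
are C¹ with gradient of size O(n). -/
theorem cutoff_C1_and_fderiv_bound_of_C2_curve
    (γ : ℝ → E3) (L : ℝ) (hL : 0 < L)
    (hγ : ContDiff ℝ 2 γ) (hγinj : Set.InjOn γ (Set.Icc 0 L))
    (harc : ∀ s ∈ Set.Icc (0:ℝ) L, ‖deriv γ s‖ = 1)
    (C : Set E3) (hC : C = γ '' Set.Icc 0 L)
    (χ : ℝ → ℝ) (hχ : ContDiff ℝ ∞ χ)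
    (hχ0 : ∀ s : ℝ, s < 1 → χ s = 0) (hχ1 : ∀ s : ℝ, 2 < s → χ s = 1)
    (η : ℕ → E3 → ℝ) (hη : ∀ n x, η n x = χ (n * Metric.infDist x C)) :
    ∃ n₀ : ℕ, ∃ C₀ > 0, ∀ n : ℕ, n > n₀ →
      ContDiff ℝ 1 (η n) ∧ ∀ x : E3, ‖fderiv ℝ (η n) x‖ ≤ C₀ * n :=
  cutoff_C1_and_fderiv_bound_of_C2_curve_general γ L hγ hγinj harc C hC χ hχ hχ0 hχ1 η hη
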